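/- arXiv:1408.3754 — 3 statements merged into one kernel-verified Lean document; each statement's English description precedes it below -/
import Mathlib

section
/- (Atkinson factorization) Let K be a commutative ring, λ ∈ K, and R an associative unital K-algebra. Let T : R → R be a K-linear Rota–Baxter operator of weight λ, i.e. T(x)·T(y) = T(x·T(y)) + T(T(x)·y) + λ·T(x·y) for all x, y ∈ R, and set T̃(x) = −λ·x − T(x). Suppose a, b_l, b_r ∈ R satisfy the fixed point equations b_l = 1 + T(b_l·a) and b_r = 1 + T̃(a·b_r). Then b_l·(1 + λ·a)·b_r = 1. -/
/-!
A Rota–Baxter operator `T` and its companion `T̃ = -λ • id - T` satisfy the mixed identity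
`T x * T̃ y = T (x * T̃ y) + T̃ (T x * y)`. Apply it to `x = b_l a`, `y = a b_r`: the fixed point
equations say `T x = b_l - 1` and `T̃ y = b_r - 1`, so both sides become expressions in `b_l`,
`b_r` and `z = b_l a b_r`; the terms `T z` and `T̃ z` add up to `-λ z`, and what remains is
`b_l b_r + λ b_l a b_r = 1`.
-/
def IsRotaBaxter {K R : Type*} [CommRing K] [Ring R] [Algebra K R] (lam : K)
    (T : R →ₗ[K] R) : Prop :=
  ∀ x y : R, T x * T y = T (x * T y) + T (T x * y) + lam • T (x * y)

namespace IsRotaBaxter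

variable {K R : Type*} [CommRing K] [Ring R] [Algebra K R] {lam : K} {T : R →ₗ[K] R}

variable (lam T) in
def compl : R →ₗ[K] R := -(lam • LinearMap.id) - T

@[simp]
theorem compl_apply (x : R) : compl lam T x = -(lam • x) - T x := rfl

theorem mul_compl (hT : IsRotaBaxter lam T) (x y : R) :
    T x * compl lam T y = T (x * compl lam T y) + compl lam T (T x * y) := by
  simp only [compl_apply, mul_sub, mul_neg, mul_smul_comm, map_sub, map_neg, map_smul,
    hT x y]
  abel

theorem mul_one_add_smul_mul_eq_one (hT : IsRotaBaxter lam T) {a bl br : R}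
    (hl : bl = 1 + T (bl * a)) (hr : br = 1 + compl lam T (a * br)) :
    bl * (1 + lam • a) * br = 1 := by
  have hTl : T (bl * a) = bl - 1 := eq_sub_iff_add_eq'.mpr hl.symm
  have hTr : compl lam T (a * br) = br - 1 := eq_sub_iff_add_eq'.mpr hr.symm
  have hTz : T (bl * a * (br - 1)) = T (bl * (a * br)) - (bl - 1) := by
    rw [mul_sub, mul_one, map_sub, hTl, mul_assoc]
  have hcz : compl lam T ((bl - 1) * (a * br)) = compl lam T (bl * (a * br)) - (br - 1) := by
    rw [sub_mul, one_mul, map_sub, hTr]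
  have key : (bl - 1) * (br - 1) = -(lam • (bl * (a * br))) - (bl - 1) - (br - 1) := by
    have mixed := hT.mul_compl (bl * a) (a * br)
    rw [hTl, hTr, hTz, hcz, compl_apply] at mixed
    rw [mixed]
    abel
  calc bl * (1 + lam • a) * br
      = (bl - 1) * (br - 1) + lam • (bl * (a * br)) + (bl - 1) + (br - 1) + 1 := by
        simp only [mul_add, add_mul, sub_mul, mul_sub, mul_one, one_mul, mul_smul_comm,
          smul_mul_assoc, mul_assoc]
        abel
    _ = 1 := by rw [key]; abel

end IsRotaBaxter

/-- **Atkinson factorization.** Let `T` be a `K`-linear Rota–Baxter operator of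
weight `λ` on an associative unital `K`-algebra `R`, and let
`T̃ x = -λ • x - T x`. If `b_l = 1 + T (b_l * a)` and `b_r = 1 + T̃ (a * b_r)`,
then `b_l * (1 + λ • a) * b_r = 1`. -/
theorem atkinson_factorization {K R : Type*} [CommRing K] [Ring R] [Algebra K R]
    (lam : K) (T : R →ₗ[K] R)
    (hRB : ∀ x y : R, T x * T y = T (x * T y) + T (T x * y) + lam • T (x * y))
    (a bl br : R)
    (hl : bl = 1 + T (bl * a))
    (hr : br = 1 + (-(lam • (a * br)) - T (a * br))) :
    bl * (1 + lam • a) * br = 1 :=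
  IsRotaBaxter.mul_one_add_smul_mul_eq_one hRB hl hr
end

section
/- Let R be an associative unital ring and T : R → R an additive map satisfying T(T(x)·y) = T(x)·y for all x, y ∈ R. Let a ∈ R and suppose 1 − a is invertible in R. Then the element b := 1 + T(a)·(1 − a)⁻¹ satisfies the fixed point equation b = 1 + T(b·a). (This is the closed-form solution of the Atkinson fixed point equation in this setting.) -/
theorem eq_one_add_mul_of_mul_one_sub_eq_one {R : Type*} [Ring R] {a u : R}
    (hu : u * (1 - a) = 1) : u = 1 + u * a := by
  rw [← hu]
  noncomm_ring

theorem apply_one_add_mul_mul_eq_of_mul_one_sub_eq_one {R : Type*} [Ring R] (T : R → R)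
    (hadd : ∀ x y : R, T (x + y) = T x + T y)
    (habs : ∀ x y : R, T (T x * y) = T x * y)
    {a u : R} (hu : u * (1 - a) = 1) :
    T ((1 + T a * u) * a) = T a * u := by
  calc T ((1 + T a * u) * a) = T (a + T a * (u * a)) := by noncomm_ring
    _ = T a * (1 + u * a) := by rw [hadd, habs, mul_add, mul_one]
    _ = T a * u := by rw [← eq_one_add_mul_of_mul_one_sub_eq_one hu]

/-- Closed form of the Atkinson fixed point equation: if `T` is additive and
satisfies the absorption identity `T (T x * y) = T x * y`, and `1 - a` is
invertible, then `b = 1 + T a * (1 - a)⁻¹` solves `b = 1 + T (b * a)`. -/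
theorem atkinson_fixed_point_closed_form {R : Type*} [Ring R] (T : R → R)
    (hadd : ∀ x y : R, T (x + y) = T x + T y)
    (habs : ∀ x y : R, T (T x * y) = T x * y)
    (a : R) (h : IsUnit (1 - a)) :
    1 + T a * Ring.inverse (1 - a) =
      1 + T ((1 + T a * Ring.inverse (1 - a)) * a) := by
  rw [apply_one_add_mul_mul_eq_of_mul_one_sub_eq_one T hadd habs (Ring.inverse_mul_cancel _ h)]
end

section
/- Let R be a commutative unital ring and T : R → R an additive operator that satisfies the identity T(x·y) = T(T(x)·y) + T(x·T(y)) for all x, y ∈ R, and such that T(x)·T(y) = 0 for all x, y ∈ R. Then both T and 1 − T are idempotent: T(T(x)) = T(x) and (1 − T)((1 − T)(x)) = (1 − T)(x) for all x ∈ R (where (1 − T)(x) = x − T(x)). -/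
/-!
Evaluating the identity at `(1, 1)` gives `T 1 = 2 T (T 1)`, and at `(x, T 1)` (where
`T x * T 1 = 0`) gives `T (x * T 1) = T (x * T (T 1))`; together `T (x * T 1) = 2 T (x * T 1)`,
so `T (x * T 1) = 0`. The identity at `(x, 1)` then reads `T x = T (T x)`, and `1 - T` is
idempotent because `T` is.
-/

namespace SimplifiedRotaBaxter

theorem sub_map_idempotent {M : Type*} [AddCommGroup M] (T : M →+ M)
    (hT : ∀ x, T (T x) = T x) (x : M) : (x - T x) - T (x - T x) = x - T x := by
  rw [map_sub, hT, sub_self, sub_zero]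

variable {R : Type*} [NonAssocRing R] (T : R →+ R)
  (hid : ∀ x y : R, T (x * y) = T (T x * y) + T (x * T y))
  (hzero : ∀ x y : R, T x * T y = 0)
include hid

theorem map_one_eq_map_map_one_add_self : T 1 = T (T 1) + T (T 1) := by
  simpa using hid 1 1

include hzero

theorem map_mul_map_one (x : R) : T (x * T 1) = 0 := by
  have hshift : T (x * T 1) = T (x * T (T 1)) := by
    simpa [hzero] using hid x (T 1)
  have hdouble : T (x * T 1) = T (x * T 1) + T (x * T 1) := by
    conv_lhs => rw [map_one_eq_map_map_one_add_self T hid, mul_add, map_add, ← hshift]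
  simpa using hdouble.symm

theorem map_map (x : R) : T (T x) = T x := by
  simpa [map_mul_map_one T hid hzero] using (hid x 1).symm

end SimplifiedRotaBaxter

open SimplifiedRotaBaxter in
/-- Let `T` be an additive operator on a commutative unital ring satisfying
`T (x*y) = T (T x * y) + T (x * T y)` and `T x * T y = 0` for all `x, y`.
Then both `T` and `1 - T` are idempotent. -/
theorem simplified_rotaBaxter_idempotent {R : Type*} [CommRing R] (T : R → R)
    (hadd : ∀ x y : R, T (x + y) = T x + T y)
    (hid : ∀ x y : R, T (x * y) = T (T x * y) + T (x * T y))
    (hzero : ∀ x y : R, T x * T y = 0) :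
    (∀ x : R, T (T x) = T x) ∧
      (∀ x : R, (x - T x) - T (x - T x) = x - T x) := by
  let T' : R →+ R := AddMonoidHom.mk' T hadd
  have hidem : ∀ x, T' (T' x) = T' x := map_map T' hid hzero
  exact ⟨hidem, sub_map_idempotent T' hidem⟩
end
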